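/- Let h be a random variable with exponential distribution of rate 1, and let I be a nonnegative random variable independent of h (both on the same probability space). Let P > 0, r > 0, σ² > 0 be real constants and α a real number. Then E[log₂(1 + P r^{−α} h / (σ² + I))] = ∫₀^∞ e^{−s σ²} · E[e^{−s I}] / ((s + P^{−1} r^{α}) · ln 2) ds. -/

import Mathlib

/-!
By the layer-cake formula, `E[log₂(1 + c X)] = ∫₀^∞ P(X > s) / ((s + c⁻¹) ln 2) ds` for
`X = h / (σ² + I) ≥ 0` and `c = P r^{-α}`. Conditioning on `I`, the exponential tail gives
`P(h > s (σ² + I)) = E[e^{-s (σ² + I)}] = e^{-s σ²} E[e^{-s I}]`.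
When `I` is not a.e.-measurable both sides vanish as junk values, since `I` can be recovered
measurably from either integrand.
-/

open MeasureTheory ProbabilityTheory Set Real

lemma expMeasure_Ioi {r x : ℝ} (hr : 0 < r) (hx : 0 ≤ x) :
    expMeasure r (Ioi x) = ENNReal.ofReal (exp (-(r * x))) := by
  have := isProbabilityMeasure_expMeasure hr
  have hcdf := cdf_expMeasure_eq hr x
  rw [if_pos hx, cdf_eq_real] at hcdf
  rw [← ofReal_measureReal, ← compl_Iic, measureReal_compl measurableSet_Iic, hcdf]
  simp

section ExponentialLaw

variable {Ω : Type*} [MeasurableSpace Ω] {μ : Measure Ω} {h : Ω → ℝ} {r : ℝ}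

lemma aemeasurable_of_map_eq_expMeasure (hr : 0 < r) (hlaw : μ.map h = expMeasure r) :
    AEMeasurable h μ :=
  have := isProbabilityMeasure_expMeasure hr
  aemeasurable_of_map_neZero (by rw [hlaw]; infer_instance)

lemma ae_pos_of_map_eq_expMeasure (hr : 0 < r) (hlaw : μ.map h = expMeasure r) :
    ∀ᵐ ω ∂μ, 0 < h ω := by
  have := isProbabilityMeasure_expMeasure hr
  have hpos : ∀ᵐ x ∂expMeasure r, 0 < x :=
    (ae_iff_measure_eq measurableSet_Ioi.nullMeasurableSet).2 <| by
      change expMeasure r (Ioi 0) = _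
      rw [expMeasure_Ioi hr le_rfl, measure_univ]
      simp
  exact (ae_map_iff (aemeasurable_of_map_eq_expMeasure hr hlaw) measurableSet_Ioi).mp
    (hlaw ▸ hpos)

lemma measureReal_lt_eq_integral_exp [IsFiniteMeasure μ] {Y : Ω → ℝ} (hr : 0 < r)
    (hlaw : μ.map h = expMeasure r) (hY : AEMeasurable Y μ) (hY0 : 0 ≤ᵐ[μ] Y)
    (hindep : IndepFun Y h μ) :
    μ.real {ω | Y ω < h ω} = ∫ ω, exp (-(r * Y ω)) ∂μ := by
  have := isProbabilityMeasure_expMeasure hr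
  have hh := aemeasurable_of_map_eq_expMeasure hr hlaw
  have hlt : MeasurableSet {p : ℝ × ℝ | p.1 < p.2} :=
    measurableSet_lt measurable_fst measurable_snd
  have hYlaw : ∀ᵐ y ∂μ.map Y, 0 ≤ y := (ae_map_iff hY measurableSet_Ici).mpr hY0
  rw [measureReal_def, integral_eq_lintegral_of_nonneg_ae (ae_of_all _ fun _ => (exp_pos _).le)
    (by fun_prop)]
  congr 1
  calc μ {ω | Y ω < h ω} = μ.map (fun ω => (Y ω, h ω)) {p | p.1 < p.2} :=
        (Measure.map_apply_of_aemeasurable (hY.prodMk hh) hlt).symm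
    _ = ∫⁻ y, expMeasure r (Ioi y) ∂μ.map Y := by
        rw [(indepFun_iff_map_prod_eq_prod_map_map hY hh).mp hindep, hlaw,
          Measure.prod_apply hlt]
        rfl
    _ = ∫⁻ y, ENNReal.ofReal (exp (-(r * y))) ∂μ.map Y :=
        lintegral_congr_ae (hYlaw.mono fun y hy => expMeasure_Ioi hr hy)
    _ = ∫⁻ ω, ENNReal.ofReal (exp (-(r * Y ω))) ∂μ := lintegral_map' (by fun_prop) hY

end ExponentialLaw

lemma integral_inv_add {a x : ℝ} (ha : 0 < a) (hxa : 0 < x + a) :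
    ∫ t in 0..x, (t + a)⁻¹ = log (1 + x / a) := by
  rw [intervalIntegral.integral_comp_add_right (fun t => t⁻¹), zero_add,
    integral_inv (notMem_uIcc_of_lt ha hxa), add_div, div_self ha.ne', add_comm]

lemma integral_comp_eq_setIntegral_measureReal_lt_mul {α : Type*} [MeasurableSpace α]
    {μ : Measure α} [IsFiniteMeasure μ] {f : α → ℝ} {g G : ℝ → ℝ}
    (f_nn : 0 ≤ᵐ[μ] f) (f_mble : AEMeasurable f μ) (g_mble : Measurable g)
    (g_intble : ∀ t > 0, IntervalIntegrable g volume 0 t) (g_nn : ∀ t > 0, 0 ≤ g t)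
    (G_mble : Measurable G) (hG : ∀ x ≥ 0, ∫ t in 0..x, g t = G x) :
    ∫ ω, G (f ω) ∂μ = ∫ t in Ioi 0, μ.real {ω | t < f ω} * g t := by
  have g_nn' : ∀ᵐ t ∂volume.restrict (Ioi 0), 0 ≤ g t :=
    (ae_restrict_mem measurableSet_Ioi).mono fun t ht => g_nn t ht
  have hGf : ∀ᵐ ω ∂μ, ∫ t in 0..f ω, g t = G (f ω) := f_nn.mono fun ω hω => hG _ hω
  have tail_anti : Antitone fun t => μ.real {ω | t < f ω} :=
    fun s t hst => measureReal_mono fun ω hω => lt_of_le_of_lt hst hω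
  rw [integral_eq_lintegral_of_nonneg_ae, integral_eq_lintegral_of_nonneg_ae]
  · congr 1
    rw [lintegral_congr_ae (hGf.mono fun ω hω => congrArg ENNReal.ofReal hω.symm),
      lintegral_comp_eq_lintegral_meas_lt_mul μ f_nn f_mble g_intble g_nn']
    refine setLIntegral_congr_fun measurableSet_Ioi fun t _ => ?_
    rw [ENNReal.ofReal_mul measureReal_nonneg, ofReal_measureReal]
  · exact g_nn'.mono fun t ht => mul_nonneg measureReal_nonneg ht
  · exact (tail_anti.measurable.mul g_mble).aestronglyMeasurable
  · filter_upwards [f_nn] with ω (hω : 0 ≤ f ω)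
    rw [Pi.zero_apply, ← hG _ hω, intervalIntegral.integral_of_le hω]
    exact setIntegral_nonneg measurableSet_Ioc fun t ht => g_nn t ht.1
  · exact (G_mble.comp_aemeasurable f_mble).aestronglyMeasurable

lemma aemeasurable_of_aemeasurable_exp_neg_mul {Ω : Type*} [MeasurableSpace Ω]
    {μ : Measure Ω} {I : Ω → ℝ} {s : ℝ} (hs : s ≠ 0)
    (hexp : AEMeasurable (fun ω => exp (-(s * I ω))) μ) :
    AEMeasurable I μ := by
  refine (hexp.log.const_mul (-s⁻¹)).congr (ae_of_all _ fun ω => ?_)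
  simp only [log_exp]
  field_simp

lemma aemeasurable_of_aemeasurable_logb_one_add_div {Ω : Type*} [MeasurableSpace Ω]
    {μ : Measure Ω} {h I : Ω → ℝ} {c σ2 : ℝ} (hh : AEMeasurable h μ)
    (hpos : ∀ᵐ ω ∂μ, 0 < c * h ω / (σ2 + I ω))
    (hlogb : AEMeasurable (fun ω => logb 2 (1 + c * h ω / (σ2 + I ω))) μ) :
    AEMeasurable I μ := by
  have hinv : AEMeasurable
      (fun ω => c * h ω / ((2 : ℝ) ^ logb 2 (1 + c * h ω / (σ2 + I ω)) - 1) - σ2) μ := by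
    fun_prop
  refine hinv.congr ?_
  filter_upwards [hpos] with ω hω
  rw [rpow_logb two_pos (by norm_num) (by positivity), add_sub_cancel_left,
    div_div_cancel₀ (fun h0 => by simp [h0] at hω), add_sub_cancel_left]

lemma integral_logb_one_add_mul_div_eq {Ω : Type*} [MeasurableSpace Ω] {μ : Measure Ω}
    [IsFiniteMeasure μ] {h I : Ω → ℝ} (hlaw : μ.map h = expMeasure 1)
    (hI : AEMeasurable I μ) (hI0 : ∀ ω, 0 ≤ I ω) (hindep : IndepFun h I μ) {c σ2 : ℝ}
    (hc : 0 < c) (hσ2 : 0 < σ2) :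
    ∫ ω, logb 2 (1 + c * h ω / (σ2 + I ω)) ∂μ
      = ∫ s in Ioi 0,
          exp (-(s * σ2)) * (∫ ω, exp (-(s * I ω)) ∂μ) / ((s + c⁻¹) * log 2) := by
  have hden : ∀ ω, 0 < σ2 + I ω := fun ω => add_pos_of_pos_of_nonneg hσ2 (hI0 ω)
  have tail : ∀ s > 0, μ.real {ω | s < h ω / (σ2 + I ω)}
      = exp (-(s * σ2)) * ∫ ω, exp (-(s * I ω)) ∂μ := by
    intro s hs
    have hset : {ω | s < h ω / (σ2 + I ω)} = {ω | s * (σ2 + I ω) < h ω} := by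
      ext ω; exact lt_div_iff₀ (hden ω)
    have hindep' : IndepFun (fun ω => s * (σ2 + I ω)) h μ :=
      hindep.symm.comp (φ := fun y => s * (σ2 + y)) (by fun_prop) measurable_id
    rw [hset, measureReal_lt_eq_integral_exp one_pos hlaw (by fun_prop)
      (ae_of_all _ fun ω => (mul_pos hs (hden ω)).le) hindep', ← integral_const_mul]
    congr with ω
    rw [← exp_add]
    ring_nf
  have hG : ∀ x ≥ 0, ∫ t in 0..x, (t + c⁻¹)⁻¹ / log 2 = logb 2 (1 + c * x) := by
    intro x hx
    rw [intervalIntegral.integral_div, integral_inv_add (inv_pos.2 hc) (by positivity),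
      div_inv_eq_mul, mul_comm, log_div_log]
  have g_intble : ∀ t > 0, IntervalIntegrable (fun t => (t + c⁻¹)⁻¹ / log 2) volume 0 t :=
    fun t ht => ContinuousOn.intervalIntegrable fun u hu => by
      rw [uIcc_of_le ht.le] at hu
      have : u + c⁻¹ ≠ 0 := by have := hu.1; positivity
      fun_prop (disch := assumption)
  have hG_mble : Measurable fun x : ℝ => logb 2 (1 + c * x) :=
    (measurable_log.comp (by fun_prop)).div_const _
  simp_rw [mul_div_assoc c]
  have hh := aemeasurable_of_map_eq_expMeasure one_pos hlaw
  rw [integral_comp_eq_setIntegral_measureReal_lt_mul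
    ((ae_pos_of_map_eq_expMeasure one_pos hlaw).mono fun ω hω => (div_pos hω (hden ω)).le)
    (by fun_prop) (by fun_prop) g_intble (fun t ht => by positivity) hG_mble hG]
  refine setIntegral_congr_fun measurableSet_Ioi fun s hs => ?_
  rw [tail s hs]
  field_simp

/-- Core throughput identity: for Rayleigh fading `h ∼ exp(1)`, independent nonnegative
interference `I`, power `P > 0`, distance `r > 0`, noise `σ² > 0` and path-loss exponent `α`,
`E[log₂(1 + P r^{−α} h/(σ² + I))]
  = ∫₀^∞ e^{−sσ²} E[e^{−sI}] / ((s + P⁻¹ r^α) ln 2) ds`. -/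
theorem expected_rate_eq_laplace_integral {Ω : Type*} [MeasurableSpace Ω] (μ : Measure Ω)
    [IsProbabilityMeasure μ] (h I : Ω → ℝ) (hlaw : μ.map h = expMeasure 1)
    (hI0 : ∀ ω, 0 ≤ I ω) (hindep : IndepFun h I μ)
    (P r σ2 : ℝ) (hP : 0 < P) (hr : 0 < r) (hσ2 : 0 < σ2) (α : ℝ) :
    ∫ ω, Real.logb 2 (1 + P * r ^ (-α) * h ω / (σ2 + I ω)) ∂μ
      = ∫ s in Set.Ioi (0 : ℝ),
          Real.exp (-(s * σ2)) * (∫ ω, Real.exp (-(s * I ω)) ∂μ)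
            / ((s + P⁻¹ * r ^ α) * Real.log 2) := by
  have hc : 0 < P * r ^ (-α) := mul_pos hP (rpow_pos_of_pos hr _)
  rw [show P⁻¹ * r ^ α = (P * r ^ (-α))⁻¹ by rw [mul_inv, rpow_neg hr.le, inv_inv]]
  by_cases hI : AEMeasurable I μ
  · exact integral_logb_one_add_mul_div_eq hlaw hI hI0 hindep hc hσ2
  have hh := aemeasurable_of_map_eq_expMeasure one_pos hlaw
  have hpos : ∀ᵐ ω ∂μ, 0 < P * r ^ (-α) * h ω / (σ2 + I ω) :=
    (ae_pos_of_map_eq_expMeasure one_pos hlaw).mono fun ω hω =>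
      div_pos (mul_pos hc hω) (add_pos_of_pos_of_nonneg hσ2 (hI0 ω))
  have hlaplace : ∀ s ∈ Ioi (0 : ℝ), ∫ ω, exp (-(s * I ω)) ∂μ = 0 := fun s hs =>
    integral_non_aestronglyMeasurable fun hF =>
      hI (aemeasurable_of_aemeasurable_exp_neg_mul (ne_of_gt hs) hF.aemeasurable)
  rw [integral_non_aestronglyMeasurable fun hF =>
      hI (aemeasurable_of_aemeasurable_logb_one_add_div hh hpos hF.aemeasurable),
    setIntegral_congr_fun measurableSet_Ioi fun s hs => by rw [hlaplace s hs, mul_zero, zero_div],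
    integral_zero]
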